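/- arXiv:math/0701671 — 5 statements merged into one kernel-verified Lean document; each statement's English description precedes it below -/
import Mathlib

section
/- Let p^3 + q_1^2 and λp^3 + q_2^2 be two torus representations of the same homogeneous sextic polynomial C (with deg p = 2, deg q_i = 3), which are distinct as torus structures (i.e., (q_1, 1) ≠ ±(q_2, λ^{1/3}) up to scalar). If λ ≠ 1, then (λ−1)p^3 = (q_1−q_2)(q_1+q_2), and consequently the conic {p = 0} is reducible: p factors as a product of two linear forms l_1·l_2. -/
open MvPolynomial

/-! Subtracting the two representations gives `(λ - 1) p³ = (q₁ - q₂)(q₁ + q₂)`. If `p` were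
irreducible, it would be prime in the factorial ring `ℂ[x₀, x₁, x₂]`, so `p²` would divide one of
the cubics `q₁ ± q₂`, which is impossible by degree. A reducible quadratic form splits into two factors
of degree one, and it is then the product of their linear parts, being the degree-two part of that
product. -/

theorem Prime.sq_dvd_or_sq_dvd_of_pow_three_dvd_mul {M : Type*} [CommMonoidWithZero M]
    [IsCancelMulZero M] {p a b : M} (hp : Prime p) (h : p ^ 3 ∣ a * b) : p ^ 2 ∣ a ∨ p ^ 2 ∣ b := by
  by_cases ha : p ∣ a
  · by_cases hb : p ∣ b
    · exact succ_dvd_or_succ_dvd_of_succ_sum_dvd_mul hp (k := 1) (l := 1)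
        (by rwa [pow_one]) (by rwa [pow_one]) h
    · exact .inl ((pow_dvd_pow p (by norm_num)).trans (hp.pow_dvd_of_dvd_mul_right 3 hb h))
  · exact .inr ((pow_dvd_pow p (by norm_num)).trans (hp.pow_dvd_of_dvd_mul_left 3 ha h))

namespace MvPolynomial

variable {σ R K : Type*}

theorem homogeneousComponent_mul_of_totalDegree_le [CommSemiring R] {f g : MvPolynomial σ R}
    {m n : ℕ} (hf : f.totalDegree ≤ m) (hg : g.totalDegree ≤ n) :
    homogeneousComponent (m + n) (f * g) =
      homogeneousComponent m f * homogeneousComponent n g := by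
  classical
  ext d
  rw [coeff_homogeneousComponent]
  split_ifs with hd
  · rw [coeff_mul, coeff_mul]
    refine Finset.sum_congr rfl fun x hx => ?_
    rw [Finset.HasAntidiagonal.mem_antidiagonal] at hx
    rw [← hx, map_add] at hd
    simp only [coeff_homogeneousComponent]
    rcases trichotomy_of_add_eq_add hd.symm with h | h | h
    · rw [if_pos h.1.symm, if_pos h.2.symm]
    · rw [coeff_eq_zero_of_totalDegree_lt (hf.trans_lt h), zero_mul, if_neg h.ne', zero_mul]
    · rw [coeff_eq_zero_of_totalDegree_lt (hg.trans_lt h), mul_zero, if_neg h.ne', mul_zero]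
  · exact (((homogeneousComponent_isHomogeneous m f).mul
      (homogeneousComponent_isHomogeneous n g)).coeff_eq_zero hd).symm

theorem totalDegree_pos_of_not_isUnit [Field K] {f : MvPolynomial σ K} (hf0 : f ≠ 0)
    (hf : ¬IsUnit f) : 0 < f.totalDegree := by
  by_contra! hdeg
  have hC : f = C (f.coeff 0) := totalDegree_eq_zero_iff_eq_C.1 (by omega)
  have hcoeff : f.coeff 0 ≠ 0 := fun h => hf0 (by rw [hC, h, C_0])
  exact hf (isUnit_iff_eq_C_of_isReduced.2 ⟨_, isUnit_iff_ne_zero.2 hcoeff, hC⟩)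

theorem IsHomogeneous.exists_eq_mul_of_not_irreducible [Field K] {p : MvPolynomial σ K}
    (hp : p.IsHomogeneous 2) (hirr : ¬Irreducible p) :
    ∃ l₁ l₂ : MvPolynomial σ K, l₁.IsHomogeneous 1 ∧ l₂.IsHomogeneous 1 ∧ p = l₁ * l₂ := by
  rcases eq_or_ne p 0 with rfl | hp0
  · exact ⟨0, 0, isHomogeneous_zero _ _ _, isHomogeneous_zero _ _ _, (mul_zero 0).symm⟩
  have hunit : ¬IsUnit p := fun hu => by
    simp [isUnit_iff_totalDegree_of_isReduced, hp.totalDegree hp0] at hu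
  obtain ⟨f, g, rfl, hf, hg⟩ : ∃ f g, p = f * g ∧ ¬IsUnit f ∧ ¬IsUnit g := by
    simpa [irreducible_iff, hunit] using hirr
  have hf0 : f ≠ 0 := left_ne_zero_of_mul hp0
  have hg0 : g ≠ 0 := right_ne_zero_of_mul hp0
  have hsum : f.totalDegree + g.totalDegree = 2 := by
    rw [← totalDegree_mul_of_isDomain hf0 hg0, hp.totalDegree hp0]
  have hfpos := totalDegree_pos_of_not_isUnit hf0 hf
  have hgpos := totalDegree_pos_of_not_isUnit hg0 hg
  refine ⟨homogeneousComponent 1 f, homogeneousComponent 1 g,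
    homogeneousComponent_isHomogeneous _ _, homogeneousComponent_isHomogeneous _ _, ?_⟩
  rw [← homogeneousComponent_mul_of_totalDegree_le (by omega) (by omega)]
  exact (homogeneousComponent_eq_self hp).symm

theorem not_prime_of_pow_three_dvd_mul [CommRing R] [IsDomain R] {p a b : MvPolynomial σ R}
    (hab : a * b ≠ 0) (ha : a.totalDegree < 2 * p.totalDegree)
    (hb : b.totalDegree < 2 * p.totalDegree) (h : p ^ 3 ∣ a * b) : ¬Prime p := by
  intro (hp : Prime p)
  have hdeg : (p ^ 2).totalDegree = 2 * p.totalDegree := by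
    rw [sq, totalDegree_mul_of_isDomain hp.ne_zero hp.ne_zero, two_mul]
  rcases hp.sq_dvd_or_sq_dvd_of_pow_three_dvd_mul h with h | h
  · have := totalDegree_le_of_dvd_of_isDomain h (left_ne_zero_of_mul hab)
    omega
  · have := totalDegree_le_of_dvd_of_isDomain h (right_ne_zero_of_mul hab)
    omega

end MvPolynomial

theorem stmt_0_general (p q₁ q₂ : MvPolynomial (Fin 3) ℂ) (l : ℂ)
    (hp : p.IsHomogeneous 2) (hq₁ : q₁.IsHomogeneous 3) (hq₂ : q₂.IsHomogeneous 3)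
    (hl : l ≠ 1)
    (heq : p ^ 3 + q₁ ^ 2 = C l * p ^ 3 + q₂ ^ 2) :
    C (l - 1) * p ^ 3 = (q₁ - q₂) * (q₁ + q₂) ∧
      ∃ l₁ l₂ : MvPolynomial (Fin 3) ℂ,
        l₁.IsHomogeneous 1 ∧ l₂.IsHomogeneous 1 ∧ p = l₁ * l₂ := by
  have hdiff : C (l - 1) * p ^ 3 = (q₁ - q₂) * (q₁ + q₂) := by
    rw [map_sub, map_one]
    linear_combination -heq
  refine ⟨hdiff, hp.exists_eq_mul_of_not_irreducible fun hirr => ?_⟩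
  have hp0 : p ≠ 0 := hirr.ne_zero
  have hprod : (q₁ - q₂) * (q₁ + q₂) ≠ 0 := by
    rw [← hdiff]
    exact mul_ne_zero (C_ne_zero.2 (sub_ne_zero.2 hl)) (pow_ne_zero 3 hp0)
  have hdeg : p.totalDegree = 2 := hp.totalDegree hp0
  refine not_prime_of_pow_three_dvd_mul hprod ?_ ?_ (Dvd.intro_left _ hdiff) hirr.prime
  · have := (hq₁.sub hq₂).totalDegree_le
    omega
  · have := (hq₁.add hq₂).totalDegree_le
    omega

/-- Two distinct torus structures `p^3 + q₁^2 = λ p^3 + q₂^2` of the same sextic with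
`λ ≠ 1` force `(λ-1)p^3 = (q₁-q₂)(q₁+q₂)` and the conic `{p = 0}` is reducible. -/
theorem stmt_0 (p q₁ q₂ : MvPolynomial (Fin 3) ℂ) (l : ℂ)
    (hp : p.IsHomogeneous 2) (hq₁ : q₁.IsHomogeneous 3) (hq₂ : q₂.IsHomogeneous 3)
    (hdist : q₁ ≠ q₂ ∧ q₁ ≠ -q₂) (hl : l ≠ 1)
    (heq : p ^ 3 + q₁ ^ 2 = C l * p ^ 3 + q₂ ^ 2) :
    C (l - 1) * p ^ 3 = (q₁ - q₂) * (q₁ + q₂) ∧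
      ∃ l₁ l₂ : MvPolynomial (Fin 3) ℂ,
        l₁.IsHomogeneous 1 ∧ l₂.IsHomogeneous 1 ∧ p = l₁ * l₂ :=
  stmt_0_general p q₁ q₂ l hp hq₁ hq₂ hl heq
end

section
/- Let G be a group whose abelianization is ℤ/6ℤ, and suppose the group Hom(K, 𝔽_3) is nontrivial, where K is the kernel of the canonical epimorphism G → ℤ/6ℤ, and suppose the conjugation action of a generator of ℤ/6ℤ squared has a nonzero fixed vector in Hom(K, 𝔽_3). Then G surjects onto the symmetric group S_3. -/
/-!
Let `c` be conjugation by `g` on `K = ker π`. Since `f ∘ c² = f`, the homomorphism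
`ψ = f / (f ∘ c)` satisfies `ψ ∘ c = ψ⁻¹`. If `ψ = 1`, then `f` is invariant under `g`, hence
under all of `G = K ⟨g⟩`, so it kills every commutator, and `f = 1` because `K = [G, G]`.
Otherwise `x ↦ (v ↦ (-1)^m v + ψ (x g^{-m}))`, for any integer `m` lifting `π x`, is a
homomorphism `G → Aff(𝔽₃) = S₃`; it does not depend on `m` because `6` is even and `ψ` kills
`K ∩ ⟨g⟩`, on which `c` acts trivially. Its image contains the reflection `v ↦ -v` (the image
of `g`) and a nontrivial translation (the image of any `k` with `ψ k ≠ 1`), so it has order 6.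
-/

open Multiplicative

section

variable {G : Type*} [Group G]

section Conjugation

variable {K : Subgroup G} [K.Normal] {g : G}

theorem map_conjNormal_zpow {A : Type*} [CommGroup A] (ψ : K →* A) {u : ℤˣ}
    (hψ : ∀ k, ψ (MulAut.conjNormal g k) = ψ k ^ (u : ℤ)) (m : ℤ) (k : K) :
    ψ (MulAut.conjNormal (g ^ m) k) = ψ k ^ ((u ^ m : ℤˣ) : ℤ) := by
  induction m using Int.induction_on generalizing k with
  | zero => simp
  | succ m ih =>
    rw [zpow_add_one, map_mul, MulAut.mul_apply, ih, hψ, ← zpow_mul, ← Units.val_mul,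
      zpow_add_one, mul_comm]
  | pred m ih =>
    have hinv : ψ (MulAut.conjNormal g⁻¹ k) = ψ k ^ (u : ℤ) := by
      have hk : ψ k = ψ (MulAut.conjNormal g⁻¹ k) ^ (u : ℤ) := by
        rw [← hψ, ← MulAut.mul_apply, ← map_mul, mul_inv_cancel, map_one, MulAut.one_apply]
      rw [hk, ← zpow_mul, ← Units.val_mul, Int.units_mul_self, Units.val_one, zpow_one]
    rw [zpow_sub_one, map_mul, MulAut.mul_apply, ih, hinv, ← zpow_mul, ← Units.val_mul,
      zpow_sub_one, Int.units_inv_eq_self, mul_comm]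

theorem eq_one_of_map_conjNormal_eq {A : Type*} [CommGroup A] (hK : K = commutator G)
    (hgen : ∀ x : G, ∃ k ∈ K, ∃ m : ℤ, x = k * g ^ m) (ψ : K →* A)
    (hψ : ∀ k, ψ (MulAut.conjNormal g k) = ψ k) : ψ = 1 := by
  have hinv (m : ℤ) (k : K) : ψ (MulAut.conjNormal (g ^ m) k) = ψ k := by
    simpa using map_conjNormal_zpow ψ (u := 1) (by simpa using hψ) m k
  have hcomm : commutator G ≤ ψ.ker.map K.subtype := by
    rw [commutator_def, Subgroup.commutator_le]
    rintro x - y -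
    obtain ⟨k, hk, a, rfl⟩ := hgen x
    obtain ⟨l, hl, b, rfl⟩ := hgen y
    refine ⟨⟨k, hk⟩ * MulAut.conjNormal (g ^ a) ⟨l, hl⟩ * MulAut.conjNormal (g ^ b) ⟨k, hk⟩⁻¹ *
      ⟨l, hl⟩⁻¹, ?_, ?_⟩
    · rw [SetLike.mem_coe, MonoidHom.mem_ker]
      simp only [map_mul, map_inv, hinv]
      rw [mul_inv_cancel_comm, mul_inv_cancel]
    · simp only [Subgroup.subtype_apply, Subgroup.coe_mul, MulAut.conjNormal_apply,
        Subgroup.coe_inv, commutatorElement_def]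
      group
  ext k
  obtain ⟨k', hk', hk'k⟩ := hcomm (hK ▸ k.2 : (k : G) ∈ commutator G)
  rwa [← Subtype.ext hk'k]

end Conjugation

theorem Subgroup.eq_top_of_orderOf_mul_eq_card {Γ : Type*} [Group Γ] [Finite Γ]
    {H : Subgroup Γ} {x y : Γ} (hx : x ∈ H) (hy : y ∈ H)
    (hcop : (orderOf x).Coprime (orderOf y)) (hcard : Nat.card Γ = orderOf x * orderOf y) :
    H = ⊤ := by
  refine H.card_eq_iff_eq_top.mp (Nat.dvd_antisymm H.card_subgroup_dvd_card ?_)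
  rw [hcard]
  exact hcop.mul_dvd_of_dvd_of_dvd (H.orderOf_dvd_natCard hx) (H.orderOf_dvd_natCard hy)

section Affine

variable {M : Type*} [AddCommGroup M]

def affinePerm (u : ℤˣ) (a : M) : Equiv.Perm M where
  toFun v := u • v + a
  invFun v := u • (v - a)
  left_inv v := by simp [smul_smul]
  right_inv v := by simp [smul_smul]

theorem affinePerm_mul (u w : ℤˣ) (a b : M) :
    affinePerm u a * affinePerm w b = affinePerm (u * w) (a + u • b) := by
  ext v
  simp only [affinePerm, Equiv.Perm.mul_apply, Equiv.coe_fn_mk, smul_add, mul_smul]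
  abel

theorem orderOf_affinePerm_one {a : ZMod 3} (ha : a ≠ 0) : orderOf (affinePerm 1 a) = 3 := by
  refine orderOf_eq_prime ?_ ?_ <;> revert a <;> decide

theorem orderOf_affinePerm_neg_one_zero : orderOf (affinePerm (-1) (0 : ZMod 3)) = 2 :=
  orderOf_eq_prime (by decide) (by decide)

end Affine

theorem MonoidHom.map_eq_one_of_commute {K : Subgroup G} [K.Normal] {g : G}
    (ψ : K →* Multiplicative (ZMod 3)) (hψ : ∀ k, ψ (MulAut.conjNormal g k) = (ψ k)⁻¹)
    (k : K) (hk : Commute g k) : ψ k = 1 := by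
  -- `ψ k = (ψ k)⁻¹`, and `𝔽₃` has no element of order 2
  have hfix : MulAut.conjNormal g k = k := Subtype.ext (by simp [hk.eq])
  have h := hψ k
  rw [hfix] at h
  revert h
  generalize ψ k = a
  revert a
  decide

section AffineRep

variable {n : ℕ} (π : G →* Multiplicative (ZMod n)) {g : G}

theorem map_zpow_eq_ofAdd (hg : π g = ofAdd 1) (m : ℤ) : π (g ^ m) = ofAdd (m : ZMod n) := by
  rw [map_zpow, hg, ← ofAdd_zsmul, zsmul_one]

theorem zpow_mem_ker_iff (hg : π g = ofAdd 1) (m : ℤ) : g ^ m ∈ π.ker ↔ (n : ℤ) ∣ m := by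
  rw [MonoidHom.mem_ker, map_zpow_eq_ofAdd π hg, ← ofAdd_zero, ofAdd.injective.eq_iff,
    ZMod.intCast_zmod_eq_zero_iff_dvd]

theorem mul_zpow_neg_mem_ker (hg : π g = ofAdd 1) {x : G} {m : ℤ}
    (hm : π x = ofAdd (m : ZMod n)) : x * g ^ (-m) ∈ π.ker := by
  rw [MonoidHom.mem_ker, map_mul, map_zpow_eq_ofAdd π hg, hm, ← ofAdd_add]
  simp

theorem exists_mem_ker_mul_zpow (hg : π g = ofAdd 1) (x : G) :
    ∃ k ∈ π.ker, ∃ m : ℤ, x = k * g ^ m :=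
  ⟨_, mul_zpow_neg_mem_ker π hg (ZMod.coe_valMinAbs (toAdd (π x))).symm,
    (toAdd (π x)).valMinAbs, by rw [zpow_neg, inv_mul_cancel_right]⟩

variable (ψ : π.ker →* Multiplicative (ZMod 3))

def affinePermAt (hg : π g = ofAdd 1) (x : G) (m : ℤ) (hm : π x = ofAdd (m : ZMod n)) :
    Equiv.Perm (ZMod 3) :=
  affinePerm ((-1) ^ m) (toAdd (ψ ⟨x * g ^ (-m), mul_zpow_neg_mem_ker π hg hm⟩))

theorem affinePermAt_eq_affinePermAt (hg : π g = ofAdd 1) (hn : Even n)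
    (hψ : ∀ k, ψ (MulAut.conjNormal g k) = (ψ k)⁻¹) {x : G} {m m' : ℤ}
    (hm : π x = ofAdd (m : ZMod n)) (hm' : π x = ofAdd (m' : ZMod n)) :
    affinePermAt π ψ hg x m hm = affinePermAt π ψ hg x m' hm' := by
  have hdvd : (n : ℤ) ∣ m - m' := by
    rw [← ZMod.intCast_eq_intCast_iff_dvd_sub, ← ofAdd.injective.eq_iff, ← hm, ← hm']
  have hsign : ((-1) ^ m : ℤˣ) = (-1) ^ m' := by
    rw [← sub_add_cancel m m', zpow_add,
      (((Int.even_coe_nat n).mpr hn).trans_dvd hdvd).neg_one_zpow, one_mul]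
  have hmem : g ^ (m' - m) ∈ π.ker :=
    (zpow_mem_ker_iff π hg _).mpr (by rw [← neg_sub]; exact hdvd.neg_right)
  have hsplit : (⟨x * g ^ (-m), mul_zpow_neg_mem_ker π hg hm⟩ : π.ker) =
      ⟨x * g ^ (-m'), mul_zpow_neg_mem_ker π hg hm'⟩ * ⟨g ^ (m' - m), hmem⟩ :=
    Subtype.ext (by simp only [Subgroup.coe_mul, mul_assoc, ← zpow_add]; ring_nf)
  rw [affinePermAt, affinePermAt, hsign, hsplit, map_mul,
    ψ.map_eq_one_of_commute hψ ⟨_, hmem⟩ ((Commute.refl g).zpow_right _), mul_one]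

theorem affinePermAt_mul (hg : π g = ofAdd 1) (hψ : ∀ k, ψ (MulAut.conjNormal g k) = (ψ k)⁻¹)
    {x y : G} {m m' : ℤ} (hm : π x = ofAdd (m : ZMod n)) (hm' : π y = ofAdd (m' : ZMod n)) :
    affinePermAt π ψ hg (x * y) (m + m') (by rw [map_mul, hm, hm', ← ofAdd_add, Int.cast_add]) =
      affinePermAt π ψ hg x m hm * affinePermAt π ψ hg y m' hm' := by
  have hψ' : ∀ k, ψ (MulAut.conjNormal g k) = ψ k ^ ((-1 : ℤˣ) : ℤ) := by simpa using hψ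
  have hsplit : (⟨x * y * g ^ (-(m + m')), mul_zpow_neg_mem_ker π hg (by
        rw [map_mul, hm, hm', ← ofAdd_add, Int.cast_add])⟩ : π.ker) =
      ⟨x * g ^ (-m), mul_zpow_neg_mem_ker π hg hm⟩ *
        MulAut.conjNormal (g ^ m) ⟨y * g ^ (-m'), mul_zpow_neg_mem_ker π hg hm'⟩ :=
    Subtype.ext (by simp only [Subgroup.coe_mul, MulAut.conjNormal_apply]; group)
  rw [affinePermAt, affinePermAt, affinePermAt, affinePerm_mul, zpow_add, hsplit, map_mul,
    map_conjNormal_zpow ψ hψ', toAdd_mul, toAdd_zpow, Units.smul_def]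

def affineRep (hg : π g = ofAdd 1) (hn : Even n)
    (hψ : ∀ k, ψ (MulAut.conjNormal g k) = (ψ k)⁻¹) : G →* Equiv.Perm (ZMod 3) :=
  MonoidHom.mk'
    (fun x => affinePermAt π ψ hg x (toAdd (π x)).valMinAbs (by rw [ZMod.coe_valMinAbs]; rfl))
    fun _ _ => by rw [← affinePermAt_mul π ψ hg hψ, affinePermAt_eq_affinePermAt π ψ hg hn hψ]

theorem affineRep_apply (hg : π g = ofAdd 1) (hn : Even n)
    (hψ : ∀ k, ψ (MulAut.conjNormal g k) = (ψ k)⁻¹) {x : G} {m : ℤ}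
    (hm : π x = ofAdd (m : ZMod n)) :
    affineRep π ψ hg hn hψ x = affinePermAt π ψ hg x m hm :=
  affinePermAt_eq_affinePermAt π ψ hg hn hψ (by rw [ZMod.coe_valMinAbs]; rfl) hm

theorem affineRep_surjective (hg : π g = ofAdd 1) (hn : Even n)
    (hψ : ∀ k, ψ (MulAut.conjNormal g k) = (ψ k)⁻¹) (hψ1 : ψ ≠ 1) :
    Function.Surjective (affineRep π ψ hg hn hψ) := by
  obtain ⟨k, hk⟩ : ∃ k, ψ k ≠ 1 := by
    by_contra! h
    exact hψ1 (MonoidHom.ext h)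
  have hg_image : affineRep π ψ hg hn hψ g = affinePerm (-1) 0 := by
    rw [affineRep_apply π ψ hg hn hψ (m := 1) (by rw [hg, Int.cast_one])]
    simp only [affinePermAt, zpow_one, zpow_neg, mul_inv_cancel]
    exact congrArg (affinePerm (-1) ∘ toAdd) (map_one ψ)
  have hk_image : affineRep π ψ hg hn hψ k = affinePerm 1 (toAdd (ψ k)) := by
    rw [affineRep_apply π ψ hg hn hψ (m := 0) (by rw [k.2, Int.cast_zero]; rfl)]
    simp [affinePermAt]
  rw [← MonoidHom.range_eq_top]
  refine Subgroup.eq_top_of_orderOf_mul_eq_card ⟨g, hg_image⟩ ⟨k, hk_image⟩ ?_ ?_ <;>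
    rw [orderOf_affinePerm_neg_one_zero, orderOf_affinePerm_one (a := toAdd (ψ k)) hk]
  · decide
  · rw [Nat.card_perm, Nat.card_zmod]; rfl

end AffineRep

end

theorem stmt_9_general (G : Type*) [Group G] (π : G →* Multiplicative (ZMod 6))
    (hker : π.ker = commutator G)
    (g : G) (hg : π g = Multiplicative.ofAdd (1 : ZMod 6))
    (f : π.ker →* Multiplicative (ZMod 3)) (hf : f ≠ 1)
    (hfix : ∀ x : G, ∀ hx : x ∈ π.ker,
      f ⟨(g * g) * x * (g * g)⁻¹, (MonoidHom.normal_ker π).conj_mem x hx (g * g)⟩ =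
        f ⟨x, hx⟩) :
    ∃ h : G →* Equiv.Perm (Fin 3), Function.Surjective h := by
  set c : MulAut π.ker := MulAut.conjNormal g
  have hfix' (k : π.ker) : f (c (c k)) = f k := by
    rw [← hfix k k.2]
    congr 1
    ext
    simp only [c, MulAut.conjNormal_apply]
    group
  set ψ := f / f.comp c.toMonoidHom
  have hψ (k : π.ker) : ψ (c k) = (ψ k)⁻¹ := by
    simp [ψ, hfix']
  by_cases hψ1 : ψ = 1
  · refine absurd (eq_one_of_map_conjNormal_eq hker (exists_mem_ker_mul_zpow π hg) f
      fun k => ?_) hf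
    exact (div_eq_one.mp (DFunLike.congr_fun hψ1 k)).symm
  · exact ⟨affineRep π ψ hg (by decide) hψ, affineRep_surjective π ψ hg (by decide) hψ hψ1⟩

/-- Let `G` be a group whose abelianization is `ℤ/6` (encoded: the canonical epimorphism
`π : G → ℤ/6` is surjective with kernel the commutator subgroup); let `K = Ker π`.  If
`Hom(K, 𝔽₃)` is nontrivial and contains a nonzero element fixed by the square of the
conjugation action of a lift `g` of a generator of `ℤ/6`, then `G` surjects onto `S₃`. -/
theorem stmt_9 (G : Type*) [Group G] (π : G →* Multiplicative (ZMod 6))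
    (hπ : Function.Surjective π) (hker : π.ker = commutator G)
    (g : G) (hg : π g = Multiplicative.ofAdd (1 : ZMod 6))
    (f : π.ker →* Multiplicative (ZMod 3)) (hf : f ≠ 1)
    (hfix : ∀ x : G, ∀ hx : x ∈ π.ker,
      f ⟨(g * g) * x * (g * g)⁻¹, (MonoidHom.normal_ker π).conj_mem x hx (g * g)⟩ =
        f ⟨x, hx⟩) :
    ∃ h : G →* Equiv.Perm (Fin 3), Function.Surjective h :=
  stmt_9_general G π hker g hg f hf hfix
end

section
/- In the 𝔽_3-vector space D_9 with distinguished basis α_1,...,α_9, define the weight w(δ) of an element δ as the number of basis vectors appearing with nonzero coefficient. Let K ⊆ D_9 be a linear subspace all of whose nonzero elements have weight at least 6 and weight divisible by 3 (i.e., weight 6 or 9). Then dim K ≤ 3. -/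
/-!
Let `u` be a vector of minimal weight `d ≥ 4` in `K`. Over `𝔽₃`, for every `v` the three
vectors `v`, `v + u`, `v - u` together have weight `2·wt u + 3m`, where `m` is the weight of `v`
on the zero set `Z` of `u`. If `v ∉ ⟨u⟩` all three are nonzero, so `3d ≤ 2d + 3m` and `m ≥ 2`.
Hence restriction to `Z` has kernel `⟨u⟩` and its image is a code in `𝔽₃^Z` without vectors of
weight `1`, a proper subspace; so `dim K ≤ 1 + (|Z| - 1) = n - d`. For `n = 9` this gives `3`
when `K` has a vector of weight `6`; otherwise every nonzero vector has full weight `9`, and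
evaluation at one coordinate is injective on `K`.
-/

open Finset Module Submodule

theorem hammingNorm_pi_single {ι β : Type*} [Fintype ι] [DecidableEq ι] [Zero β] [DecidableEq β]
    (i : ι) {a : β} (ha : a ≠ 0) : hammingNorm (Pi.single i a : ι → β) = 1 := by
  rw [hammingNorm, Finset.card_eq_one]
  exact ⟨i, by ext j; by_cases hj : j = i <;> simp [hj, ha]⟩

section Field

variable {F ι : Type*} [Field F] [DecidableEq F] [Fintype ι]

theorem finrank_lt_card_of_hammingNorm_ne_one [Nonempty ι] (W : Submodule F (ι → F))
    (hW : ∀ w ∈ W, hammingNorm w ≠ 1) : finrank F W < Fintype.card ι := by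
  classical
  have hne : W ≠ ⊤ := fun htop ↦
    hW _ (htop ▸ mem_top) (hammingNorm_pi_single (Classical.arbitrary ι) one_ne_zero)
  simpa [Module.finrank_fintype_fun_eq_card] using Submodule.finrank_lt hne

theorem finrank_le_one_of_hammingNorm_eq_card [Nonempty ι] (K : Submodule F (ι → F))
    (hK : ∀ v ∈ K, v ≠ 0 → hammingNorm v = Fintype.card ι) : finrank F K ≤ 1 := by
  classical
  let i : ι := Classical.arbitrary ι
  have hinj : Function.Injective ((LinearMap.proj i).comp K.subtype) := by
    rw [← LinearMap.ker_eq_bot, LinearMap.ker_eq_bot']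
    rintro ⟨v, hvK⟩ hvi
    by_contra hv
    have hv0 : v ≠ 0 := fun h ↦ hv (by simp [h])
    have hlt : hammingNorm v < Fintype.card ι := by
      refine Finset.card_lt_univ_of_notMem (x := i) ?_
      simpa using hvi
    exact hlt.ne (hK v hvK hv0)
  simpa using LinearMap.finrank_le_finrank_of_injective hinj

end Field

section Ternary

variable {ι : Type*} [Fintype ι]

theorem hammingNorm_add_hammingNorm_add_hammingNorm_sub (u v : ι → ZMod 3) :
    hammingNorm v + hammingNorm (v + u) + hammingNorm (v - u)
      = 2 * hammingNorm u + 3 * hammingNorm (fun i : {i // u i = 0} ↦ v i) := by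
  have hpoint : ∀ a b : ZMod 3,
      ((if a ≠ 0 then 1 else 0) + (if a + b ≠ 0 then 1 else 0) + (if a - b ≠ 0 then 1 else 0) : ℕ)
        = 2 * (if b ≠ 0 then 1 else 0) + 3 * (if b = 0 then (if a ≠ 0 then 1 else 0) else 0) := by
    decide
  have hZ : hammingNorm (fun i : {i // u i = 0} ↦ v i)
      = ∑ i, if u i = 0 then (if v i ≠ 0 then 1 else 0) else 0 := by
    rw [hammingNorm, card_filter, ← sum_subtype {i | u i = 0} (fun i ↦ by simp)
      (fun i ↦ if v i ≠ 0 then 1 else 0), sum_filter]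
  rw [hZ]
  simp only [hammingNorm, card_filter, Pi.add_apply, Pi.sub_apply, mul_sum, ← sum_add_distrib]
  exact sum_congr rfl fun i _ ↦ hpoint (v i) (u i)

theorem three_mul_le_of_notMem_span_singleton {K : Submodule (ZMod 3) (ι → ZMod 3)} {d : ℕ}
    (hK : ∀ v ∈ K, v ≠ 0 → d ≤ hammingNorm v) {u v : ι → ZMod 3} (huK : u ∈ K) (hvK : v ∈ K)
    (hvu : v ∉ (ZMod 3) ∙ u) :
    3 * d ≤ 2 * hammingNorm u + 3 * hammingNorm (fun i : {i // u i = 0} ↦ v i) := by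
  have hv : v ≠ 0 := fun h ↦ hvu (h ▸ zero_mem _)
  have hvadd : v + u ≠ 0 := fun h ↦ hvu <| by
    rw [← neg_eq_of_add_eq_zero_left h]
    exact neg_mem (mem_span_singleton_self u)
  have hvsub : v - u ≠ 0 := fun h ↦ hvu <| by
    rw [sub_eq_zero.mp h]
    exact mem_span_singleton_self u
  have := hammingNorm_add_hammingNorm_add_hammingNorm_sub u v
  have := hK v hvK hv
  have := hK _ (K.add_mem hvK huK) hvadd
  have := hK _ (K.sub_mem hvK huK) hvsub
  omega

theorem finrank_add_hammingNorm_le_card {K : Submodule (ZMod 3) (ι → ZMod 3)}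
    {u : ι → ZMod 3} (huK : u ∈ K) (hmin : ∀ v ∈ K, v ≠ 0 → hammingNorm u ≤ hammingNorm v)
    (hu : 4 ≤ hammingNorm u) (hlt : hammingNorm u < Fintype.card ι) :
    finrank (ZMod 3) K + hammingNorm u ≤ Fintype.card ι := by
  let ψ : K →ₗ[ZMod 3] ({i // u i = 0} → ZMod 3) :=
    (LinearMap.funLeft (ZMod 3) (ZMod 3) Subtype.val).comp K.subtype
  have hψ : ∀ v : K, ψ v = fun i : {i // u i = 0} ↦ (v : ι → ZMod 3) i := fun _ ↦ rfl
  have two_le : ∀ v : K, (v : ι → ZMod 3) ∉ (ZMod 3) ∙ u → 2 ≤ hammingNorm (ψ v) := by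
    intro v hv
    have := three_mul_le_of_notMem_span_singleton hmin huK v.2 hv
    rw [hψ]
    omega
  have hZ : Fintype.card {i // u i = 0} = Fintype.card ι - hammingNorm u := by
    rw [hammingNorm, ← Fintype.card_subtype]
    simpa using Fintype.card_subtype_compl (fun i ↦ u i ≠ 0)
  have hker : finrank (ZMod 3) (LinearMap.ker ψ) ≤ 1 := by
    have hle : (LinearMap.ker ψ).map K.subtype ≤ (ZMod 3) ∙ u := by
      rintro _ ⟨v, hv, rfl⟩
      by_contra hvu
      have := two_le v hvu
      rw [LinearMap.mem_ker.mp hv, hammingNorm_zero] at this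
      omega
    calc finrank (ZMod 3) (LinearMap.ker ψ)
        = finrank (ZMod 3) ((LinearMap.ker ψ).map K.subtype) :=
          (finrank_map_subtype_eq K _).symm
      _ ≤ finrank (ZMod 3) ((ZMod 3) ∙ u) := Submodule.finrank_mono hle
      _ = 1 := finrank_span_singleton (hammingNorm_pos_iff.mp (by omega))
  have hrange : finrank (ZMod 3) (LinearMap.range ψ) < Fintype.card {i // u i = 0} := by
    have : Nonempty {i // u i = 0} := Fintype.card_pos_iff.mp (by omega)
    refine finrank_lt_card_of_hammingNorm_ne_one _ ?_
    rintro _ ⟨v, rfl⟩ h1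
    by_cases hvu : (v : ι → ZMod 3) ∈ (ZMod 3) ∙ u
    · obtain ⟨a, ha⟩ := mem_span_singleton.mp hvu
      have : ψ v = 0 := by
        ext i
        rw [hψ, ← ha]
        simp [i.2]
      rw [this, hammingNorm_zero] at h1
      omega
    · have := two_le v hvu
      omega
  have := LinearMap.finrank_range_add_finrank_ker ψ
  omega

end Ternary

/-- A linear subspace of `𝔽₃⁹` all of whose nonzero vectors have Hamming weight at least 6
and divisible by 3 has dimension at most 3. -/
theorem stmt_10 (K : Submodule (ZMod 3) (Fin 9 → ZMod 3))
    (h : ∀ v ∈ K, v ≠ 0 → 6 ≤ hammingNorm v ∧ 3 ∣ hammingNorm v) :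
    Module.finrank (ZMod 3) K ≤ 3 := by
  by_cases hsix : ∃ u ∈ K, hammingNorm u = 6
  · obtain ⟨u, huK, hu⟩ := hsix
    have := finrank_add_hammingNorm_le_card huK (fun v hvK hv ↦ hu ▸ (h v hvK hv).1)
      (by omega) (by simp [hu])
    simp only [hu, Fintype.card_fin] at this
    omega
  · push Not at hsix
    have hnine : ∀ v ∈ K, v ≠ 0 → hammingNorm v = Fintype.card (Fin 9) := by
      intro v hvK hv
      have := h v hvK hv
      have := hsix v hvK
      have : hammingNorm v ≤ 9 := hammingNorm_le_card_fintype.trans_eq (Fintype.card_fin 9)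
      simp only [Fintype.card_fin]
      omega
    exact (finrank_le_one_of_hammingNorm_eq_card K hnine).trans (by norm_num)
end

section
/- In 𝔽_3^8 with the Hamming weight, let K be a linear subspace all of whose nonzero elements have weight exactly 6 (equivalently, weight at least 6 and divisible by 3, since weight 9 is impossible). Then dim K ≤ 2. Moreover, the subspace spanned by (1,1,1,1,1,1,0,0) and (0,0,−1,−1,1,1,1,1) achieves dimension 2, and all its 8 nonzero vectors have weight 6. -/
open Finset

lemma aux_dvd : ∀ a b c : ZMod 3,
    18 ∣ ∑ x ∈ ({x : Fin 3 → ZMod 3 | x ≠ 0} : Finset _),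
      (if x 0 * a + x 1 * b + x 2 * c ≠ 0 then 1 else 0) := by decide

lemma aux_card : ({x : Fin 3 → ZMod 3 | x ≠ 0} : Finset _).card = 26 := by decide

lemma aux3 : ∀ c d : ZMod 3,
    c • ![1, 1, 1, 1, 1, 1, 0, 0] + d • ![0, 0, -1, -1, 1, 1, 1, 1] ≠ (0 : Fin 8 → ZMod 3) →
    hammingNorm (c • ![1, 1, 1, 1, 1, 1, 0, 0] + d • ![0, 0, -1, -1, 1, 1, 1, 1] : Fin 8 → ZMod 3) = 6 := by
  decide

lemma aux_dim (K : Submodule (ZMod 3) (Fin 8 → ZMod 3))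
    (hK : ∀ v ∈ K, v ≠ 0 → hammingNorm v = 6) : Module.finrank (ZMod 3) K ≤ 2 := by
  by_contra h
  push_neg at h
  obtain ⟨f, hf⟩ := exists_linearIndependent_of_le_finrank (R := ZMod 3) (M := K) h
  have hf' : LinearIndependent (ZMod 3) (fun i => (f i : Fin 8 → ZMod 3)) :=
    hf.map' K.subtype K.ker_subtype
  set lin : (Fin 3 → ZMod 3) → (Fin 8 → ZMod 3) :=
    fun x => x 0 • (f 0 : Fin 8 → ZMod 3) + x 1 • (f 1 : Fin 8 → ZMod 3)
      + x 2 • (f 2 : Fin 8 → ZMod 3) with hlin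
  have hmem : ∀ x, lin x ∈ K := fun x => by
    exact K.add_mem (K.add_mem (K.smul_mem _ (f 0).2) (K.smul_mem _ (f 1).2))
      (K.smul_mem _ (f 2).2)
  have hne : ∀ x : Fin 3 → ZMod 3, x ≠ 0 → lin x ≠ 0 := by
    intro x hx h0
    apply hx
    have := Fintype.linearIndependent_iff.mp hf' x (by
      rw [Fin.sum_univ_three]; exact h0)
    funext i; exact this i
  set S := ∑ x ∈ ({x : Fin 3 → ZMod 3 | x ≠ 0} : Finset _), hammingNorm (lin x) with hS
  have h1 : S = 156 := by
    rw [hS, Finset.sum_congr rfl (fun x hx => hK _ (hmem x) (hne x (by simpa using hx)))]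
    rw [Finset.sum_const, aux_card]
    norm_num
  have h2 : (18 : ℕ) ∣ S := by
    have hnorm : ∀ y : Fin 8 → ZMod 3,
        hammingNorm y = ∑ i : Fin 8, if y i ≠ 0 then 1 else 0 := by
      intro y; rw [hammingNorm, Finset.card_filter]
    rw [hS]
    simp_rw [hnorm]
    rw [Finset.sum_comm]
    apply Finset.dvd_sum
    intro i _
    have heq : ∑ x ∈ ({x : Fin 3 → ZMod 3 | x ≠ 0} : Finset _),
        (if lin x i ≠ 0 then 1 else 0)
        = ∑ x ∈ ({x : Fin 3 → ZMod 3 | x ≠ 0} : Finset _),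
          (if x 0 * (f 0 : Fin 8 → ZMod 3) i + x 1 * (f 1 : Fin 8 → ZMod 3) i
            + x 2 * (f 2 : Fin 8 → ZMod 3) i ≠ 0 then 1 else 0) :=
      Finset.sum_congr rfl (fun x _ => by simp [hlin])
    rw [heq]
    exact aux_dvd _ _ _
  rw [h1] at h2
  omega

/-- A linear subspace of `𝔽₃⁸` all of whose nonzero vectors have Hamming weight exactly 6
has dimension at most 2; moreover the span of `(1,1,1,1,1,1,0,0)` and `(0,0,-1,-1,1,1,1,1)`
achieves dimension 2 and all its nonzero vectors have weight 6. -/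
theorem stmt_11 :
    (∀ K : Submodule (ZMod 3) (Fin 8 → ZMod 3),
      (∀ v ∈ K, v ≠ 0 → hammingNorm v = 6) → Module.finrank (ZMod 3) K ≤ 2) ∧
    (Module.finrank (ZMod 3)
        (Submodule.span (ZMod 3)
          ({![1, 1, 1, 1, 1, 1, 0, 0], ![0, 0, -1, -1, 1, 1, 1, 1]} :
            Set (Fin 8 → ZMod 3))) = 2) ∧
    (∀ v ∈ Submodule.span (ZMod 3)
        ({![1, 1, 1, 1, 1, 1, 0, 0], ![0, 0, -1, -1, 1, 1, 1, 1]} :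
          Set (Fin 8 → ZMod 3)), v ≠ 0 → hammingNorm v = 6) := by
  refine ⟨aux_dim, ?_, ?_⟩
  · have li : LinearIndependent (ZMod 3)
        ![(![1, 1, 1, 1, 1, 1, 0, 0] : Fin 8 → ZMod 3), ![0, 0, -1, -1, 1, 1, 1, 1]] := by
      rw [Fintype.linearIndependent_iff]
      decide
    have hr : ({![1, 1, 1, 1, 1, 1, 0, 0], ![0, 0, -1, -1, 1, 1, 1, 1]} :
        Set (Fin 8 → ZMod 3)) = Set.range
          ![(![1, 1, 1, 1, 1, 1, 0, 0] : Fin 8 → ZMod 3), ![0, 0, -1, -1, 1, 1, 1, 1]] := by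
      simp [Matrix.range_cons, Matrix.range_empty]
      exact Set.pair_comm _ _
    rw [hr, finrank_span_eq_card li]
    simp
  · intro v hv hvne
    obtain ⟨c, d, rfl⟩ := Submodule.mem_span_pair.mp hv
    exact aux3 c d hvne
end

section
/- In 𝔽_3^7 with the Hamming weight, let K be a linear subspace all of whose nonzero elements have weight at least 6 and divisible by 3. Then dim K ≤ 1. -/
/-- In a nonzero vector of `𝔽₃⁷` of Hamming weight at least 6, the set of zero
coordinates has at most one element. -/
lemma zeros_card_le_one (w : Fin 7 → ZMod 3) (hw : 6 ≤ hammingNorm w) :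
    (Finset.univ.filter fun i => w i = 0).card ≤ 1 := by
  have hsplit : (Finset.univ.filter fun i => w i = 0).card
      + (Finset.univ.filter fun i => ¬ (w i = 0)).card = 7 := by
    rw [Finset.card_filter_add_card_filter_not]
    simp
  have hn : hammingNorm w = (Finset.univ.filter fun i => ¬ (w i = 0)).card := rfl
  omega

lemma zmod3_cases : ∀ a b : ZMod 3, a = 0 ∨ b = 0 ∨ a + b = 0 ∨ a - b = 0 := by decide

/-- A linear subspace of `𝔽₃⁷` all of whose nonzero vectors have Hamming weight at least 6
and divisible by 3 has dimension at most 1. -/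
theorem stmt_12 (K : Submodule (ZMod 3) (Fin 7 → ZMod 3))
    (h : ∀ v ∈ K, v ≠ 0 → 6 ≤ hammingNorm v ∧ 3 ∣ hammingNorm v) :
    Module.finrank (ZMod 3) K ≤ 1 := by
  by_contra hc
  push_neg at hc
  have h2 : 2 ≤ Module.finrank (ZMod 3) K := hc
  obtain ⟨f, hf⟩ := exists_linearIndependent_of_le_finrank (n := 2) h2
  -- combinations c • u + d • v are nonzero whenever (c,d) ≠ 0
  have key : ∀ c d : ZMod 3, (c ≠ 0 ∨ d ≠ 0) →
      c • ((f 0 : K) : Fin 7 → ZMod 3) + d • ((f 1 : K) : Fin 7 → ZMod 3) ≠ 0 := by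
    intro c d hcd hzero
    have : c • (f 0) + d • (f 1) = (0 : K) := by
      apply Subtype.ext
      simpa using hzero
    have hsum : ∑ i : Fin 2, (![c, d] i) • f i = 0 := by
      simp [Fin.sum_univ_two, this]
    have := (Fintype.linearIndependent_iff.mp hf) ![c, d] hsum
    rcases hcd with hcd | hcd
    · exact hcd (by simpa using this 0)
    · exact hcd (by simpa using this 1)
  set u : Fin 7 → ZMod 3 := ((f 0 : K) : Fin 7 → ZMod 3) with hu
  set v : Fin 7 → ZMod 3 := ((f 1 : K) : Fin 7 → ZMod 3) with hv
  have huK : u ∈ K := (f 0).2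
  have hvK : v ∈ K := (f 1).2
  have huvK : u + v ∈ K := K.add_mem huK hvK
  have huv'K : u - v ∈ K := K.sub_mem huK hvK
  have hu0 : u ≠ 0 := by have := key 1 0 (Or.inl one_ne_zero); simpa using this
  have hv0 : v ≠ 0 := by have := key 0 1 (Or.inr one_ne_zero); simpa using this
  have huv0 : u + v ≠ 0 := by have := key 1 1 (Or.inl one_ne_zero); simpa using this
  have huv'0 : u - v ≠ 0 := by
    have := key 1 (-1) (Or.inl one_ne_zero)
    simpa [sub_eq_add_neg] using this
  -- each of the four vectors has at most one zero coordinate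
  have c1 := zeros_card_le_one u (h u huK hu0).1
  have c2 := zeros_card_le_one v (h v hvK hv0).1
  have c3 := zeros_card_le_one (u + v) (h _ huvK huv0).1
  have c4 := zeros_card_le_one (u - v) (h _ huv'K huv'0).1
  -- every coordinate is a zero of one of the four vectors
  have hcover : (Finset.univ : Finset (Fin 7)) ⊆
      (Finset.univ.filter fun i => u i = 0) ∪ (Finset.univ.filter fun i => v i = 0)
      ∪ (Finset.univ.filter fun i => (u + v) i = 0)
      ∪ (Finset.univ.filter fun i => (u - v) i = 0) := by
    intro i _
    have : u i = 0 ∨ v i = 0 ∨ u i + v i = 0 ∨ u i - v i = 0 := zmod3_cases (u i) (v i)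
    simp only [Finset.mem_union, Finset.mem_filter, Finset.mem_univ, true_and,
      Pi.add_apply, Pi.sub_apply]
    tauto
  have hcard := Finset.card_le_card hcover
  have hA := Finset.card_union_le
    ((Finset.univ.filter fun i => u i = 0) ∪ (Finset.univ.filter fun i => v i = 0)
      ∪ (Finset.univ.filter fun i => (u + v) i = 0))
    (Finset.univ.filter fun i => (u - v) i = 0)
  have hB := Finset.card_union_le
    ((Finset.univ.filter fun i => u i = 0) ∪ (Finset.univ.filter fun i => v i = 0))
    (Finset.univ.filter fun i => (u + v) i = 0)
  have hC := Finset.card_union_le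
    (Finset.univ.filter fun i => u i = 0) (Finset.univ.filter fun i => v i = 0)
  have h7 : (Finset.univ : Finset (Fin 7)).card = 7 := by simp
  omega
end
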